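/- Suppose K : ℝ^d → ℝ satisfies |K(x)| ≤ C|x|^{2−d} for |x| < 1 and |K(x)| ≤ C|x|^{(1−d)/2} for |x| ≥ 1, with d ≥ 4. Then for any continuous v with ‖v‖_{(d−1)/2} := sup_x ⟨x⟩^{(d−1)/2} |v(x)| < ∞, the convolution K ∗ (v³) satisfies sup_x ⟨x⟩^{(d−1)/2} |K ∗ (v³)(x)| ≤ C' ‖v‖³_{(d−1)/2} for a constant C' depending only on d and C. -/

import Mathlib

/-!
With `ν = (d - 1) / 2` and `⟨x⟩ = (1 + ‖x‖²)^{1/2}`, we have `|K| ≤ C κ`, where `κ z = ‖z‖^{2-d}`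
on the unit ball and `‖z‖^{-ν}` outside, and `|v y|³ ≤ ‖v‖³ ⟨y⟩^{-3ν}`. Pointwise,
`κ z ⟨x - z⟩^{-3ν} ≤ 4^ν ⟨x⟩^{-ν} (𝟙_{‖z‖<1} ‖z‖^{2-d} + ⟨z⟩^{-3ν} + ⟨x - z⟩^{-3ν})`: near the
singularity `⟨x⟩ ≤ 2 ⟨x - z⟩`, and otherwise `⟨x⟩ ≤ ⟨z⟩ + ⟨x - z⟩`, so one of the two brackets
is at least `⟨x⟩ / 2`. The majorant has an integral independent of `x`, finite because
`‖z‖^{2-d}` is locally integrable and `3ν > d`, which is where `d ≥ 4` enters.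
-/

open MeasureTheory

noncomputable def wnorm {d : ℕ} (ν : ℝ) (f : EuclideanSpace ℝ (Fin d) → ℝ) : ℝ :=
  ⨆ x : EuclideanSpace ℝ (Fin d), ((1 + ‖x‖ ^ 2) ^ ((1 : ℝ) / 2)) ^ ν * |f x|

open Metric Module

noncomputable section

section JapaneseBracket

variable {E : Type*} [NormedAddCommGroup E]

def japaneseBracket (x : E) : ℝ := (1 + ‖x‖ ^ 2) ^ ((1 : ℝ) / 2)

theorem japaneseBracket_eq_sqrt (x : E) : japaneseBracket x = √(1 + ‖x‖ ^ 2) :=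
  (Real.sqrt_eq_rpow _).symm

theorem japaneseBracket_pos (x : E) : 0 < japaneseBracket x := by
  rw [japaneseBracket_eq_sqrt]; positivity

theorem japaneseBracket_rpow_pos (x : E) (r : ℝ) : 0 < japaneseBracket x ^ r :=
  Real.rpow_pos_of_pos (japaneseBracket_pos x) r

theorem one_le_japaneseBracket (x : E) : 1 ≤ japaneseBracket x := by
  rw [japaneseBracket_eq_sqrt, Real.one_le_sqrt]; nlinarith [norm_nonneg x]

theorem norm_le_japaneseBracket (x : E) : ‖x‖ ≤ japaneseBracket x := by
  rw [japaneseBracket_eq_sqrt]; exact Real.le_sqrt_of_sq_le (by linarith)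

theorem continuous_japaneseBracket : Continuous (japaneseBracket : E → ℝ) := by
  rw [show (japaneseBracket : E → ℝ) = fun x ↦ √(1 + ‖x‖ ^ 2) from funext japaneseBracket_eq_sqrt]
  fun_prop

theorem continuous_japaneseBracket_rpow (r : ℝ) : Continuous fun x : E ↦ japaneseBracket x ^ r :=
  continuous_japaneseBracket.rpow_const fun x ↦ Or.inl (japaneseBracket_pos x).ne'

theorem japaneseBracket_add_le (x y : E) : japaneseBracket (x + y) ≤ japaneseBracket x + ‖y‖ := by
  have hx := norm_le_japaneseBracket x
  have hsq : japaneseBracket x ^ 2 = 1 + ‖x‖ ^ 2 := by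
    rw [japaneseBracket_eq_sqrt, Real.sq_sqrt (by positivity)]
  rw [japaneseBracket_eq_sqrt, Real.sqrt_le_iff]
  refine ⟨by linarith [japaneseBracket_pos x, norm_nonneg y], ?_⟩
  nlinarith [norm_add_le x y, norm_nonneg (x + y), norm_nonneg x, norm_nonneg y]

theorem japaneseBracket_le_one_add_norm (x : E) : japaneseBracket x ≤ 1 + ‖x‖ := by
  rw [japaneseBracket_eq_sqrt]; exact sqrt_one_add_norm_sq_le x

theorem integrable_japaneseBracket_rpow_neg [NormedSpace ℝ E] [FiniteDimensional ℝ E]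
    [MeasurableSpace E] [BorelSpace E] (μ : Measure E) [μ.IsAddHaarMeasure] {q : ℝ}
    (hq : (finrank ℝ E : ℝ) < q) : Integrable (fun x : E ↦ japaneseBracket x ^ (-q)) μ := by
  refine (integrable_rpow_neg_one_add_norm_sq (μ := μ) hq).congr (.of_forall fun x ↦ ?_)
  simp only [japaneseBracket]
  rw [← Real.rpow_mul (by positivity)]
  ring_nf

end JapaneseBracket

theorem rpow_neg_le_of_le_mul {a b c p : ℝ} (hb : 0 < b) (hc : 0 < c) (hba : b ≤ c * a)
    (hp : 0 ≤ p) : a ^ (-p) ≤ c ^ p * b ^ (-p) := by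
  have ha : 0 < a := pos_of_mul_pos_right (hb.trans_le hba) hc.le
  calc a ^ (-p) = c ^ p * (c * a) ^ (-p) := by
        rw [Real.mul_rpow hc.le ha.le, ← mul_assoc, ← Real.rpow_add hc, add_neg_cancel,
          Real.rpow_zero, one_mul]
    _ ≤ c ^ p * b ^ (-p) :=
        mul_le_mul_of_nonneg_left (Real.rpow_le_rpow_of_nonpos hb hba (neg_nonpos.mpr hp))
          (by positivity)

/-- Whichever of `a`, `b` is larger is at least `s / 2`; the surplus decay `q - p` of `b` is
moved onto `a` when `b` is the larger one. -/
theorem rpow_neg_mul_rpow_neg_le {a b s p q : ℝ} (ha : 0 < a) (hb : 0 < b) (hs : 0 < s)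
    (hsab : s ≤ a + b) (hp : 0 ≤ p) (hpq : p ≤ q) :
    a ^ (-p) * b ^ (-q) ≤ 2 ^ p * s ^ (-p) * (a ^ (-q) + b ^ (-q)) := by
  have haq : 0 ≤ a ^ (-q) := by positivity
  have hbq : 0 ≤ b ^ (-q) := by positivity
  rcases le_total b a with hba | hab
  · calc a ^ (-p) * b ^ (-q) ≤ (2 ^ p * s ^ (-p)) * b ^ (-q) := by
          gcongr; exact rpow_neg_le_of_le_mul hs two_pos (by linarith) hp
      _ ≤ 2 ^ p * s ^ (-p) * (a ^ (-q) + b ^ (-q)) := by gcongr; linarith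
  · have hsplit (c : ℝ) (hc : 0 < c) : c ^ (-q) = c ^ (-p) * c ^ (-(q - p)) := by
      rw [← Real.rpow_add hc]; ring_nf
    calc a ^ (-p) * b ^ (-q) = b ^ (-p) * (a ^ (-p) * b ^ (-(q - p))) := by rw [hsplit b hb]; ring
      _ ≤ (2 ^ p * s ^ (-p)) * (a ^ (-p) * a ^ (-(q - p))) :=
          mul_le_mul (rpow_neg_le_of_le_mul hs two_pos (by linarith) hp)
            (mul_le_mul_of_nonneg_left (Real.rpow_le_rpow_of_nonpos ha hab (by linarith))
              (by positivity)) (by positivity) (by positivity)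
      _ ≤ 2 ^ p * s ^ (-p) * (a ^ (-q) + b ^ (-q)) := by rw [← hsplit a ha]; gcongr; linarith

theorem abs_integral_mul_comp_sub_le {G : Type*} [MeasurableSpace G] [Sub G] {μ : Measure G}
    {K g κ w : G → ℝ} {C M : ℝ} (hK : ∀ z, |K z| ≤ C * κ z) (hg : ∀ y, |g y| ≤ M * w y) {x : G}
    (hint : Integrable (fun z ↦ κ z * w (x - z)) μ) :
    |∫ z, K z * g (x - z) ∂μ| ≤ C * M * ∫ z, κ z * w (x - z) ∂μ := by
  rw [← Real.norm_eq_abs, ← integral_const_mul]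
  refine norm_integral_le_of_norm_le (hint.const_mul _) (.of_forall fun z ↦ ?_)
  rw [norm_mul, Real.norm_eq_abs, Real.norm_eq_abs]
  calc |K z| * |g (x - z)| ≤ (C * κ z) * (M * w (x - z)) :=
        mul_le_mul (hK z) (hg _) (abs_nonneg _) ((abs_nonneg _).trans (hK z))
    _ = C * M * (κ z * w (x - z)) := by ring

section KernelProfile

variable {E : Type*} [NormedAddCommGroup E] {α p q : ℝ}

def kernelProfile (α p : ℝ) (z : E) : ℝ := if ‖z‖ < 1 then ‖z‖ ^ (-α) else ‖z‖ ^ (-p)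

theorem kernelProfile_nonneg (z : E) : 0 ≤ kernelProfile α p z := by
  unfold kernelProfile; split_ifs <;> positivity

theorem measurable_kernelProfile [MeasurableSpace E] [OpensMeasurableSpace E] :
    Measurable (kernelProfile α p : E → ℝ) :=
  Measurable.ite (measurableSet_lt measurable_norm measurable_const) (by fun_prop) (by fun_prop)

theorem kernelProfile_mul_le (hp : 0 ≤ p) (hpq : p ≤ q) (x z : E) :
    kernelProfile α p z * japaneseBracket (x - z) ^ (-q) ≤
      4 ^ p * japaneseBracket x ^ (-p) *
        ((ball 0 1).indicator (fun y ↦ ‖y‖ ^ (-α)) z + japaneseBracket z ^ (-q) +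
          japaneseBracket (x - z) ^ (-q)) := by
  set a := japaneseBracket z
  set b := japaneseBracket (x - z)
  set s := japaneseBracket x
  have ha := japaneseBracket_pos z
  have hb := japaneseBracket_pos (x - z)
  have hs := japaneseBracket_pos x
  have hsb : s ≤ b + ‖z‖ := by simpa using japaneseBracket_add_le (x - z) z
  have h4 : (4 : ℝ) ^ p = 2 ^ p * 2 ^ p := by rw [← Real.mul_rpow] <;> norm_num
  have haq : 0 ≤ a ^ (-q) := by positivity
  have hbq : 0 ≤ b ^ (-q) := by positivity
  unfold kernelProfile
  split_ifs with hz
  · have hzα : 0 ≤ ‖z‖ ^ (-α) := by positivity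
    rw [Set.indicator_of_mem (mem_ball_zero_iff.mpr hz)]
    have hbqp : b ^ (-q) ≤ 4 ^ p * s ^ (-p) :=
      calc b ^ (-q) ≤ b ^ (-p) :=
            Real.rpow_le_rpow_of_exponent_le (one_le_japaneseBracket _) (by linarith)
        _ ≤ 2 ^ p * s ^ (-p) :=
            rpow_neg_le_of_le_mul hs two_pos (by linarith [one_le_japaneseBracket (x - z)]) hp
        _ ≤ 4 ^ p * s ^ (-p) := by gcongr; norm_num
    calc ‖z‖ ^ (-α) * b ^ (-q) ≤ ‖z‖ ^ (-α) * (4 ^ p * s ^ (-p)) := by gcongr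
      _ ≤ 4 ^ p * s ^ (-p) * (‖z‖ ^ (-α) + a ^ (-q) + b ^ (-q)) := by
          rw [mul_comm]; gcongr; linarith
  · rw [Set.indicator_of_notMem (by simpa using hz), zero_add, h4]
    have hz1 : 1 ≤ ‖z‖ := not_lt.mp hz
    calc ‖z‖ ^ (-p) * b ^ (-q) ≤ (2 ^ p * a ^ (-p)) * b ^ (-q) := by
          gcongr
          exact rpow_neg_le_of_le_mul ha two_pos
            (by linarith [japaneseBracket_le_one_add_norm z]) hp
      _ ≤ 2 ^ p * (2 ^ p * s ^ (-p) * (a ^ (-q) + b ^ (-q))) := by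
          rw [mul_assoc]
          exact mul_le_mul_of_nonneg_left (rpow_neg_mul_rpow_neg_le ha hb hs
            (by linarith [norm_le_japaneseBracket z]) hp hpq) (by positivity)
      _ = 2 ^ p * 2 ^ p * s ^ (-p) * (a ^ (-q) + b ^ (-q)) := by ring

section Integral

variable [NormedSpace ℝ E] [FiniteDimensional ℝ E] [MeasurableSpace E] [BorelSpace E]
  (μ : Measure E) [μ.IsAddHaarMeasure]

theorem exists_integral_kernelProfile_mul_le (hn : 1 ≤ finrank ℝ E) (hα : α < finrank ℝ E)
    (hp : 0 ≤ p) (hpq : p ≤ q) (hq : (finrank ℝ E : ℝ) < q) :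
    ∃ c > 0, ∀ x : E,
      Integrable (fun z ↦ kernelProfile α p z * japaneseBracket (x - z) ^ (-q)) μ ∧
      ∫ z, kernelProfile α p z * japaneseBracket (x - z) ^ (-q) ∂μ ≤
        c * japaneseBracket x ^ (-p) := by
  set f : E → ℝ := (ball 0 1).indicator fun y ↦ ‖y‖ ^ (-α)
  set g : E → ℝ := fun y ↦ japaneseBracket y ^ (-q)
  have hf : Integrable f μ := by
    refine IntegrableOn.integrable_indicator ?_ measurableSet_ball
    refine integrableOn_ball_of_norm_le_rpow hn hα (C := 1) (.of_forall fun y ↦ ?_)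
      (by fun_prop : Measurable fun y : E ↦ ‖y‖ ^ (-α)).aestronglyMeasurable
    rw [one_mul, Real.norm_of_nonneg (by positivity)]
  have hg : Integrable g μ := integrable_japaneseBracket_rpow_neg μ hq
  have hf_nonneg : 0 ≤ ∫ y, f y ∂μ :=
    integral_nonneg (Set.indicator_nonneg fun y _ ↦ by positivity)
  have hg_pos : 0 < ∫ y, g y ∂μ :=
    integral_pos_of_integrable_nonneg_nonzero (x := 0) (continuous_japaneseBracket_rpow _) hg
      (fun y ↦ (japaneseBracket_rpow_pos y _).le)
      (japaneseBracket_rpow_pos 0 _).ne'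
  refine ⟨4 ^ p * (∫ y, f y ∂μ + 2 * ∫ y, g y ∂μ), by positivity, fun x ↦ ?_⟩
  have hgx : Integrable (fun z ↦ g (x - z)) μ := hg.comp_sub_left x
  have hmaj : Integrable (fun z ↦ f z + g z + g (x - z)) μ := (hf.add hg).add hgx
  have hle := kernelProfile_mul_le (α := α) hp hpq x
  have hint : Integrable (fun z ↦ kernelProfile α p z * g (x - z)) μ := by
    refine (hmaj.const_mul (4 ^ p * japaneseBracket x ^ (-p))).mono' ?_ (.of_forall fun z ↦ ?_)
    · exact (measurable_kernelProfile.mul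
        ((continuous_japaneseBracket_rpow _).measurable.comp (by fun_prop))).aestronglyMeasurable
    · rw [Real.norm_of_nonneg (mul_nonneg (kernelProfile_nonneg z)
        (japaneseBracket_rpow_pos _ _).le)]
      exact hle z
  refine ⟨hint, ?_⟩
  calc ∫ z, kernelProfile α p z * g (x - z) ∂μ
      ≤ ∫ z, 4 ^ p * japaneseBracket x ^ (-p) * (f z + g z + g (x - z)) ∂μ :=
        integral_mono hint (hmaj.const_mul _) hle
    _ = 4 ^ p * japaneseBracket x ^ (-p) * (∫ y, f y ∂μ + ∫ y, g y ∂μ + ∫ y, g y ∂μ) := by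
        rw [integral_const_mul, integral_add (f := fun z ↦ f z + g z) (hf.add hg) hgx,
          integral_add hf hg, integral_sub_left_eq_self g μ x]
    _ = 4 ^ p * (∫ y, f y ∂μ + 2 * ∫ y, g y ∂μ) * japaneseBracket x ^ (-p) := by ring

end Integral

end KernelProfile

section WeightedNorm

variable {d : ℕ} {ν : ℝ} {f : EuclideanSpace ℝ (Fin d) → ℝ}

theorem wnorm_nonneg : 0 ≤ wnorm ν f :=
  Real.iSup_nonneg fun x ↦ mul_nonneg (japaneseBracket_rpow_pos x ν).le (abs_nonneg _)

theorem abs_le_wnorm_mul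
    (hf : BddAbove (Set.range fun x ↦ ((1 + ‖x‖ ^ 2) ^ ((1 : ℝ) / 2)) ^ ν * |f x|))
    (y : EuclideanSpace ℝ (Fin d)) : |f y| ≤ wnorm ν f * japaneseBracket y ^ (-ν) := by
  rw [Real.rpow_neg (japaneseBracket_pos y).le, le_mul_inv_iff₀ (japaneseBracket_rpow_pos y ν),
    mul_comm]
  exact le_ciSup hf y

theorem abs_pow_le_wnorm_pow_mul
    (hf : BddAbove (Set.range fun x ↦ ((1 + ‖x‖ ^ 2) ^ ((1 : ℝ) / 2)) ^ ν * |f x|))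
    (k : ℕ) (y : EuclideanSpace ℝ (Fin d)) :
    |f y| ^ k ≤ wnorm ν f ^ k * japaneseBracket y ^ (-(k * ν)) := by
  calc |f y| ^ k ≤ (wnorm ν f * japaneseBracket y ^ (-ν)) ^ k :=
        pow_le_pow_left₀ (abs_nonneg _) (abs_le_wnorm_mul hf y) k
    _ = wnorm ν f ^ k * japaneseBracket y ^ (-(k * ν)) := by
        rw [mul_pow, ← Real.rpow_natCast (japaneseBracket y ^ (-ν)),
          ← Real.rpow_mul (japaneseBracket_pos y).le]
        ring_nf

end WeightedNorm

end

theorem convolution_cube_weighted_bound_general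
    (d : ℕ) (hd : 4 ≤ d) (C : ℝ) (hC : 0 < C)
    (K : EuclideanSpace ℝ (Fin d) → ℝ)
    (hK1 : ∀ x : EuclideanSpace ℝ (Fin d), ‖x‖ < 1 → |K x| ≤ C * ‖x‖ ^ ((2 : ℝ) - d))
    (hK2 : ∀ x : EuclideanSpace ℝ (Fin d), 1 ≤ ‖x‖ → |K x| ≤ C * ‖x‖ ^ ((1 - (d : ℝ)) / 2))
    (v : EuclideanSpace ℝ (Fin d) → ℝ)
    (hvb : BddAbove
      (Set.range fun x => ((1 + ‖x‖ ^ 2) ^ ((1 : ℝ) / 2)) ^ (((d : ℝ) - 1) / 2) * |v x|)) :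
    ∃ C' > 0, ∀ x : EuclideanSpace ℝ (Fin d),
      ((1 + ‖x‖ ^ 2) ^ ((1 : ℝ) / 2)) ^ (((d : ℝ) - 1) / 2) *
          |∫ z, K z * v (x - z) ^ 3| ≤ C' * wnorm (((d : ℝ) - 1) / 2) v ^ 3 := by
  set ν : ℝ := ((d : ℝ) - 1) / 2 with hν_def
  have hd' : (4 : ℝ) ≤ d := by exact_mod_cast hd
  have hν : 3 / 2 ≤ ν := by rw [hν_def]; linarith
  have hdim : finrank ℝ (EuclideanSpace ℝ (Fin d)) = d := finrank_euclideanSpace_fin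
  obtain ⟨c, hc_pos, hc⟩ := exists_integral_kernelProfile_mul_le
    (volume : Measure (EuclideanSpace ℝ (Fin d))) (α := d - 2) (p := ν) (q := 3 * ν)
    (by omega) (by rw [hdim]; linarith) (by linarith) (by linarith) (by rw [hdim]; linarith)
  refine ⟨C * c, by positivity, fun x ↦ ?_⟩
  have hK (z : EuclideanSpace ℝ (Fin d)) : |K z| ≤ C * kernelProfile (d - 2) ν z := by
    unfold kernelProfile
    split_ifs with hz
    · simpa using hK1 z hz
    · convert hK2 z (not_lt.mp hz) using 3; ring
  obtain ⟨hint, hle⟩ := hc x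
  have hconv := abs_integral_mul_comp_sub_le (g := fun y ↦ v y ^ 3) hK
    (fun y ↦ by simpa [abs_pow] using abs_pow_le_wnorm_pow_mul hvb 3 y) hint
  change japaneseBracket x ^ ν * _ ≤ _
  have hx := japaneseBracket_pos x
  have hM : 0 ≤ wnorm ν v := wnorm_nonneg
  calc _ ≤ japaneseBracket x ^ ν * (C * wnorm ν v ^ 3 * (c * japaneseBracket x ^ (-ν))) := by
        gcongr; exact hconv.trans (by gcongr)
    _ = C * c * wnorm ν v ^ 3 := by
        rw [Real.rpow_neg hx.le]
        field_simp [(japaneseBracket_rpow_pos x ν).ne']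

theorem convolution_cube_weighted_bound
    (d : ℕ) (hd : 4 ≤ d) (C : ℝ) (hC : 0 < C)
    (K : EuclideanSpace ℝ (Fin d) → ℝ) (hKmeas : Measurable K)
    (hK1 : ∀ x : EuclideanSpace ℝ (Fin d), ‖x‖ < 1 → |K x| ≤ C * ‖x‖ ^ ((2 : ℝ) - d))
    (hK2 : ∀ x : EuclideanSpace ℝ (Fin d), 1 ≤ ‖x‖ → |K x| ≤ C * ‖x‖ ^ ((1 - (d : ℝ)) / 2))
    (v : EuclideanSpace ℝ (Fin d) → ℝ) (hv : Continuous v)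
    (hvb : BddAbove
      (Set.range fun x => ((1 + ‖x‖ ^ 2) ^ ((1 : ℝ) / 2)) ^ (((d : ℝ) - 1) / 2) * |v x|)) :
    ∃ C' > 0, ∀ x : EuclideanSpace ℝ (Fin d),
      ((1 + ‖x‖ ^ 2) ^ ((1 : ℝ) / 2)) ^ (((d : ℝ) - 1) / 2) *
          |∫ z, K z * v (x - z) ^ 3| ≤ C' * wnorm (((d : ℝ) - 1) / 2) v ^ 3 :=
  convolution_cube_weighted_bound_general d hd C hC K hK1 hK2 v hvb
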